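/- arXiv:2201.05722 — 3 statements merged into one kernel-verified Lean document; each statement's English description precedes it below -/
import Mathlib

section
/- Let 0 < S_m < S_{k+1} < S_* ≤ 1. Then S_* * ln(S_{k+1}/S_m) - (S_{k+1} - S_m) ≤ (S_* - S_m)^2 / S_m. -/
open Real

theorem log_div_le_sub_div {a b : ℝ} (ha : 0 < a) (hb : 0 < b) :
    log (b / a) ≤ (b - a) / a := by
  calc log (b / a) ≤ b / a - 1 := log_le_sub_one_of_pos (div_pos hb ha)
    _ = (b - a) / a := by field_simp

theorem mul_div_sub_le_sq_div {a b c : ℝ} (ha : 0 < a) (hab : a ≤ b) (hbc : b ≤ c) :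
    c * ((b - a) / a) - (b - a) ≤ (c - a) ^ 2 / a := by
  have factor : c * ((b - a) / a) - (b - a) = (c - a) * (b - a) / a := by
    field_simp
  rw [factor, sq]
  gcongr
  linarith

theorem level_line_lower_estimate_general (Sm Sk Sstar : ℝ)
    (h0 : 0 < Sm) (h1 : Sm < Sk) (h2 : Sk < Sstar) :
    Sstar * Real.log (Sk / Sm) - (Sk - Sm) ≤ (Sstar - Sm) ^ 2 / Sm := by
  have hSstar : 0 ≤ Sstar := by linarith
  calc Sstar * log (Sk / Sm) - (Sk - Sm)
      ≤ Sstar * ((Sk - Sm) / Sm) - (Sk - Sm) := by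
        gcongr
        exact log_div_le_sub_div h0 (h0.trans h1)
    _ ≤ (Sstar - Sm) ^ 2 / Sm := mul_div_sub_le_sq_div h0 h1.le h2.le

theorem level_line_lower_estimate (Sm Sk Sstar : ℝ)
    (h0 : 0 < Sm) (h1 : Sm < Sk) (h2 : Sk < Sstar) (h3 : Sstar ≤ 1) :
    Sstar * Real.log (Sk / Sm) - (Sk - Sm) ≤ (Sstar - Sm) ^ 2 / Sm :=
  level_line_lower_estimate_general Sm Sk Sstar h0 h1 h2
end

section
/- Suppose f : (0,1] → (0,∞) satisfies ε₀ ≤ f'(I) for all I and f(I) ≤ R₀ⁿᵃᵗ for I ∈ (0,1], with ε₀ > 0. Then for any I_*, I ∈ (0,1], (ε₀/(2R₀ⁿᵃᵗ))(I - I_*)² ≤ ∫_{I_*}^{I} (f(i) - f(I_*))/f(i) di. -/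
/-!
Since `f' ≥ ε₀`, the mean value theorem gives `|f i - f I_*| ≥ ε₀ |i - I_*|` with the same sign as
`i - I_*`, and dividing by `f i ≤ R₀ⁿᵃᵗ` keeps this bound up to the factor `1 / R₀ⁿᵃᵗ`. So the
integrand dominates the linear function `(ε₀ / R₀ⁿᵃᵗ) (i - I_*)` between `I_*` and `I` in the
orientation of the integral, and that linear function integrates to `(ε₀ / (2 R₀ⁿᵃᵗ)) (I - I_*)²`.
-/

open Set MeasureTheory

theorem intervalIntegral.integral_le_integral_of_le_of_ge {g h : ℝ → ℝ} {a b : ℝ}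
    (hg : IntervalIntegrable g volume a b) (hh : IntervalIntegrable h volume a b)
    (hab : a ≤ b → ∀ x ∈ Icc a b, h x ≤ g x) (hba : b ≤ a → ∀ x ∈ Icc b a, g x ≤ h x) :
    ∫ x in a..b, h x ≤ ∫ x in a..b, g x := by
  rcases le_total a b with hle | hle
  · exact intervalIntegral.integral_mono_on hle hh hg (hab hle)
  · rw [intervalIntegral.integral_symm b, intervalIntegral.integral_symm b, neg_le_neg_iff]
    exact intervalIntegral.integral_mono_on hle hg.symm hh.symm (hba hle)

theorem integral_const_mul_sub_left (c a b : ℝ) :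
    ∫ x in a..b, c * (x - a) = c / 2 * (b - a) ^ 2 := by
  rw [intervalIntegral.integral_const_mul, intervalIntegral.integral_comp_sub_right (fun x ↦ x),
    integral_id]
  ring

theorem div_mul_le_div_of_mul_le {ε R x y d : ℝ} (hε : 0 ≤ ε) (hx : 0 ≤ x) (hd : ε * x ≤ d)
    (hy : 0 < y) (hyR : y ≤ R) : ε / R * x ≤ d / y := by
  rw [div_mul_eq_mul_div]
  exact div_le_div₀ ((mul_nonneg hε hx).trans hd) hd hy hyR

theorem Convex.mul_sub_le_sub_of_hasDerivAt {f f' : ℝ → ℝ} {s : Set ℝ} {ε : ℝ}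
    (hs : Convex ℝ s) (hf : ∀ x ∈ s, HasDerivAt f (f' x) x ∧ ε ≤ f' x)
    {a b : ℝ} (ha : a ∈ s) (hb : b ∈ s) (hab : a ≤ b) : ε * (b - a) ≤ f b - f a := by
  refine hs.mul_sub_le_image_sub_of_le_deriv
    (fun x hx ↦ (hf x hx).1.continuousAt.continuousWithinAt)
    (fun x hx ↦ (hf x (interior_subset hx)).1.differentiableAt.differentiableWithinAt)
    (fun x hx ↦ ?_) a ha b hb hab
  rw [(hf x (interior_subset hx)).1.deriv]
  exact (hf x (interior_subset hx)).2

theorem integral_lower_bound (f f' : ℝ → ℝ) (eps0 Rnat : ℝ)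
    (heps : 0 < eps0)
    (hf : ∀ x ∈ Set.Ioc (0 : ℝ) 1,
      0 < f x ∧ f x ≤ Rnat ∧ HasDerivAt f (f' x) x ∧ eps0 ≤ f' x) :
    ∀ Istar ∈ Set.Ioc (0 : ℝ) 1, ∀ I ∈ Set.Ioc (0 : ℝ) 1,
      eps0 / (2 * Rnat) * (I - Istar) ^ 2 ≤
        ∫ i in Istar..I, (f i - f Istar) / f i := by
  intro Istar hIstar I hI
  have hslope {a b : ℝ} (ha : a ∈ Ioc (0 : ℝ) 1) (hb : b ∈ Ioc (0 : ℝ) 1) (hab : a ≤ b) :=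
    (convex_Ioc 0 1).mul_sub_le_sub_of_hasDerivAt (fun x hx ↦ (hf x hx).2.2) ha hb hab
  have hsub : uIcc Istar I ⊆ Ioc 0 1 := ordConnected_Ioc.uIcc_subset hIstar hI
  have hint : IntervalIntegrable (fun i ↦ (f i - f Istar) / f i) volume Istar I :=
    ContinuousOn.intervalIntegrable fun i hi ↦
      (((hf i (hsub hi)).2.2.1.continuousAt.sub continuousAt_const).div
        (hf i (hsub hi)).2.2.1.continuousAt (hf i (hsub hi)).1.ne').continuousWithinAt
  calc eps0 / (2 * Rnat) * (I - Istar) ^ 2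
      = ∫ i in Istar..I, eps0 / Rnat * (i - Istar) := by
        rw [integral_const_mul_sub_left, div_div, mul_comm Rnat]
    _ ≤ ∫ i in Istar..I, (f i - f Istar) / f i := by
      refine intervalIntegral.integral_le_integral_of_le_of_ge hint
        ((by fun_prop : Continuous _).intervalIntegrable _ _) (fun _ i hi ↦ ?_) (fun _ i hi ↦ ?_)
      · have hi' : i ∈ Ioc (0 : ℝ) 1 := hsub (Icc_subset_uIcc hi)
        exact div_mul_le_div_of_mul_le heps.le (sub_nonneg.2 hi.1) (hslope hIstar hi' hi.1)
          (hf i hi').1 (hf i hi').2.1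
      · have hi' : i ∈ Ioc (0 : ℝ) 1 := hsub (Icc_subset_uIcc' hi)
        have hbound := div_mul_le_div_of_mul_le heps.le (sub_nonneg.2 hi.2)
          (hslope hi' hIstar hi.2) (hf i hi').1 (hf i hi').2.1
        rw [← neg_sub (f Istar), neg_div, ← neg_sub Istar, mul_neg]
        exact neg_le_neg hbound
end

section
/- Let R₁, R₂ : [0,1] → ℝ be decreasing with values in [R₀ⁱⁿᵗ, R₀ⁿᵃᵗ], |R₁(x) - R₂(y)| ≤ q₀(|x-y| + δ) for all x,y (with δ ≥ 0 a fixed state distance), and let I_*¹, I_*² ∈ (0,ρ) satisfy 1/R_j(I_*ʲ) = 1 - I_*ʲ/ρ for j = 1,2 with 0 < ρ < 1. If additionally R₂(I) ≤ R₁(I) for all I and R₂( I_*¹) ≥ R₁(I_*¹) - q₀·Δ for some Δ ≥ 0, then 0 ≤ I_*¹ - I_*² = ρ(S_*² - S_*¹) ≤ (ρ q₀ Δ)/(R₂(I_*²) R₁(I_*¹)), where S_*ʲ = 1/R_j(I_*ʲ). -/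
/-!
An endemic equilibrium of the branch `R` satisfies `I = ρ (1 - 1 / R I)`, so two equilibria differ
by `ρ (1 / R₂ I₂ - 1 / R₁ I₁) = ρ (R₁ I₁ - R₂ I₂) / (R₂ I₂ R₁ I₁)`. If `I₁ < I₂`, monotonicity of
`R₂` and `R₂ ≤ R₁` would give `R₂ I₂ ≤ R₁ I₁` and hence `I₂ ≤ I₁`; so `I₂ ≤ I₁`, and then
`R₁ I₁ - R₂ I₂ ≤ R₁ I₁ - R₂ I₁ ≤ q₀ Δ` bounds the difference. Positivity of `R` at an
equilibrium comes from the equation itself, as `1 - I / ρ > 0` for `I < ρ`.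
-/

/-- `I` is an endemic equilibrium of the branch `R`, with susceptible fraction `S = 1 / R I`. -/
def IsEndemicEquilibrium (R : ℝ → ℝ) (ρ I : ℝ) : Prop :=
  1 / R I = 1 - I / ρ

namespace IsEndemicEquilibrium

variable {R R₁ R₂ : ℝ → ℝ} {ρ I I₁ I₂ : ℝ}

theorem eq_mul (h : IsEndemicEquilibrium R ρ I) (hρ : ρ ≠ 0) : I = ρ * (1 - 1 / R I) := by
  rw [h]
  field_simp
  ring

theorem pos (h : IsEndemicEquilibrium R ρ I) (hρ : 0 < ρ) (hI : I < ρ) : 0 < R I := by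
  have : 0 < 1 / R I := by
    rw [h, sub_pos, div_lt_one hρ]
    exact hI
  exact one_div_pos.mp this

theorem sub_eq (h₁ : IsEndemicEquilibrium R₁ ρ I₁) (h₂ : IsEndemicEquilibrium R₂ ρ I₂)
    (hρ : ρ ≠ 0) : I₁ - I₂ = ρ * (1 / R₂ I₂ - 1 / R₁ I₁) := by
  linear_combination h₁.eq_mul hρ - h₂.eq_mul hρ

/-- A lower branch has its equilibrium further left. -/
theorem le_of_antitoneOn {s : Set ℝ} (h₁ : IsEndemicEquilibrium R₁ ρ I₁)
    (h₂ : IsEndemicEquilibrium R₂ ρ I₂) (hρ : 0 < ρ) (hI₂ : I₂ < ρ)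
    (hanti : AntitoneOn R₂ s) (hI₁s : I₁ ∈ s) (hI₂s : I₂ ∈ s) (hle : R₂ I₁ ≤ R₁ I₁) :
    I₂ ≤ I₁ := by
  by_contra! hlt
  have hR : R₂ I₂ ≤ R₁ I₁ := (hanti hI₁s hI₂s hlt.le).trans hle
  have hS : 1 / R₁ I₁ ≤ 1 / R₂ I₂ := one_div_le_one_div_of_le (h₂.pos hρ hI₂) hR
  have : 0 ≤ I₁ - I₂ := by
    rw [h₁.sub_eq h₂ hρ.ne']
    exact mul_nonneg hρ.le (sub_nonneg.mpr hS)
  linarith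

end IsEndemicEquilibrium

theorem mul_one_div_sub_one_div_le {ρ a b c : ℝ} (hρ : 0 ≤ ρ) (ha : 0 < a) (hb : 0 < b)
    (hc : b - a ≤ c) : ρ * (1 / a - 1 / b) ≤ ρ * c / (a * b) := by
  rw [one_div, one_div, inv_sub_inv ha.ne' hb.ne', ← mul_div_assoc]
  gcongr

theorem consecutive_equilibria_comparison_general
    (R1 R2 : ℝ → ℝ) (q0 ρ I1 I2 Δ : ℝ)
    (hdec2 : AntitoneOn R2 (Set.Icc (0 : ℝ) 1))
    (hρ1 : ρ < 1)
    (hI1 : I1 ∈ Set.Ioo 0 ρ) (hI2 : I2 ∈ Set.Ioo 0 ρ)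
    (heq1 : 1 / R1 I1 = 1 - I1 / ρ) (heq2 : 1 / R2 I2 = 1 - I2 / ρ)
    (hle : ∀ x ∈ Set.Icc (0 : ℝ) 1, R2 x ≤ R1 x)
    (hclose : R1 I1 - q0 * Δ ≤ R2 I1) :
    0 ≤ I1 - I2 ∧
      I1 - I2 = ρ * (1 / R2 I2 - 1 / R1 I1) ∧
      I1 - I2 ≤ ρ * q0 * Δ / (R2 I2 * R1 I1) := by
  have h₁ : IsEndemicEquilibrium R1 ρ I1 := heq1
  have h₂ : IsEndemicEquilibrium R2 ρ I2 := heq2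
  have hρ : 0 < ρ := hI1.1.trans hI1.2
  have hI1s : I1 ∈ Set.Icc (0 : ℝ) 1 := ⟨hI1.1.le, (hI1.2.trans hρ1).le⟩
  have hI2s : I2 ∈ Set.Icc (0 : ℝ) 1 := ⟨hI2.1.le, (hI2.2.trans hρ1).le⟩
  have h21 : I2 ≤ I1 := h₁.le_of_antitoneOn h₂ hρ hI2.2 hdec2 hI1s hI2s (hle I1 hI1s)
  have hdiff := h₁.sub_eq h₂ hρ.ne'
  refine ⟨sub_nonneg.mpr h21, hdiff, ?_⟩
  have hgap : R1 I1 - R2 I2 ≤ q0 * Δ := by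
    linarith [hdec2 hI2s hI1s h21]
  rw [hdiff, mul_assoc]
  exact mul_one_div_sub_one_div_le hρ.le (h₂.pos hρ hI2.2) (h₁.pos hρ hI1.2) hgap

theorem consecutive_equilibria_comparison
    (R1 R2 : ℝ → ℝ) (Rint Rnat q0 δ ρ I1 I2 Δ : ℝ)
    (hRint : 0 < Rint)
    (hdec1 : AntitoneOn R1 (Set.Icc (0 : ℝ) 1))
    (hdec2 : AntitoneOn R2 (Set.Icc (0 : ℝ) 1))
    (hrange1 : ∀ x ∈ Set.Icc (0 : ℝ) 1, R1 x ∈ Set.Icc Rint Rnat)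
    (hrange2 : ∀ x ∈ Set.Icc (0 : ℝ) 1, R2 x ∈ Set.Icc Rint Rnat)
    (hδ : 0 ≤ δ)
    (hLip : ∀ x ∈ Set.Icc (0 : ℝ) 1, ∀ y ∈ Set.Icc (0 : ℝ) 1,
      |R1 x - R2 y| ≤ q0 * (|x - y| + δ))
    (hρ0 : 0 < ρ) (hρ1 : ρ < 1)
    (hI1 : I1 ∈ Set.Ioo 0 ρ) (hI2 : I2 ∈ Set.Ioo 0 ρ)
    (heq1 : 1 / R1 I1 = 1 - I1 / ρ) (heq2 : 1 / R2 I2 = 1 - I2 / ρ)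
    (hle : ∀ x ∈ Set.Icc (0 : ℝ) 1, R2 x ≤ R1 x)
    (hΔ : 0 ≤ Δ)
    (hclose : R1 I1 - q0 * Δ ≤ R2 I1) :
    0 ≤ I1 - I2 ∧
      I1 - I2 = ρ * (1 / R2 I2 - 1 / R1 I1) ∧
      I1 - I2 ≤ ρ * q0 * Δ / (R2 I2 * R1 I1) :=
  consecutive_equilibria_comparison_general R1 R2 q0 ρ I1 I2 Δ hdec2 hρ1 hI1 hI2 heq1 heq2 hle
    hclose
end
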